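/- If λ = β = 1/2, then the ideals of B'(1/2,1/2) are exactly the six subspaces: {0}, span{ab}, span{a, ab}, span{b, ab}, span{a, b, ab}, and B'(1/2,1/2) itself. -/
import Mathlib


/-- The multiplication of the generalized ABO-blood type algebra `B'(l, β)` on `ℝ⁴`,
with ordered basis `o = e₀`, `a = e₁`, `b = e₂`, `ab = e₃`, determined by bilinearity,
commutativity and: `o∘o = o`, `o∘a = l•a`, `o∘b = l•b`, `a∘a = a`, `b∘b = b`,
`a∘b = ((l-β)/l)•a + ((l+β-1)/l)•b + ab`, `o∘ab = a∘ab = b∘ab = ab∘ab = 0`. -/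
noncomputable def Bmul (l β : ℝ) (x y : Fin 4 → ℝ) : Fin 4 → ℝ :=
  ![x 0 * y 0,
    l * (x 0 * y 1 + x 1 * y 0) + x 1 * y 1 + (l - β) / l * (x 1 * y 2 + x 2 * y 1),
    l * (x 0 * y 2 + x 2 * y 0) + x 2 * y 2 + (l + β - 1) / l * (x 1 * y 2 + x 2 * y 1),
    x 1 * y 2 + x 2 * y 1]

/-- The basis vector `o`. -/
noncomputable def vo : Fin 4 → ℝ := ![1, 0, 0, 0]
/-- The basis vector `a`. -/
noncomputable def va : Fin 4 → ℝ := ![0, 1, 0, 0]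
/-- The basis vector `b`. -/
noncomputable def vb : Fin 4 → ℝ := ![0, 0, 1, 0]
/-- The basis vector `ab`. -/
noncomputable def vab : Fin 4 → ℝ := ![0, 0, 0, 1]

/-- A linear subspace `I` is an ideal of `B'(l, β)` if `x ∘ y ∈ I` whenever `y ∈ I`. -/
def IsIdeal (l β : ℝ) (I : Submodule ℝ (Fin 4 → ℝ)) : Prop :=
  ∀ x y : Fin 4 → ℝ, y ∈ I → Bmul l β x y ∈ I


lemma decomp (x : Fin 4 → ℝ) : x = x 0 • vo + x 1 • va + x 2 • vb + x 3 • vab := by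
  funext i; fin_cases i <;> simp [vo, va, vb, vab]

lemma coord_zero_of_mem {s : Set (Fin 4 → ℝ)} {i : Fin 4} (h : ∀ z ∈ s, z i = 0) :
    ∀ x ∈ Submodule.span ℝ s, x i = 0 := by
  intro x hx
  induction hx using Submodule.span_induction with
  | mem z hz => exact h z hz
  | zero => rfl
  | add a b _ _ ha hb => simp [ha, hb]
  | smul c a _ ha => simp [ha]

lemma mem_sabab (x : Fin 4 → ℝ) :
    x ∈ Submodule.span ℝ ({va, vb, vab} : Set (Fin 4 → ℝ)) ↔ x 0 = 0 := by
  constructor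
  · refine coord_zero_of_mem ?_ x
    rintro z (rfl | rfl | rfl) <;> simp [va, vb, vab]
  · intro h
    have hd := decomp x
    rw [h, zero_smul, zero_add] at hd
    rw [hd]
    refine add_mem (add_mem ?_ ?_) ?_ <;>
      exact Submodule.smul_mem _ _ (Submodule.subset_span (by simp))

lemma mem_saab (x : Fin 4 → ℝ) :
    x ∈ Submodule.span ℝ ({va, vab} : Set (Fin 4 → ℝ)) ↔ x 0 = 0 ∧ x 2 = 0 := by
  constructor
  · intro hx
    refine ⟨coord_zero_of_mem ?_ x hx, coord_zero_of_mem ?_ x hx⟩ <;>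
      · rintro z (rfl | rfl) <;> simp [va, vab]
  · rintro ⟨h0, h2⟩
    have hd := decomp x
    rw [h0, h2, zero_smul, zero_smul, zero_add, add_zero] at hd
    rw [hd]
    refine add_mem ?_ ?_ <;>
      exact Submodule.smul_mem _ _ (Submodule.subset_span (by simp))

lemma mem_sbab (x : Fin 4 → ℝ) :
    x ∈ Submodule.span ℝ ({vb, vab} : Set (Fin 4 → ℝ)) ↔ x 0 = 0 ∧ x 1 = 0 := by
  constructor
  · intro hx
    refine ⟨coord_zero_of_mem ?_ x hx, coord_zero_of_mem ?_ x hx⟩ <;>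
      · rintro z (rfl | rfl) <;> simp [vb, vab]
  · rintro ⟨h0, h1⟩
    have hd := decomp x
    rw [h0, h1, zero_smul, zero_smul, zero_add, zero_add] at hd
    rw [hd]
    refine add_mem ?_ ?_ <;>
      exact Submodule.smul_mem _ _ (Submodule.subset_span (by simp))

lemma mem_sab (x : Fin 4 → ℝ) :
    x ∈ Submodule.span ℝ ({vab} : Set (Fin 4 → ℝ)) ↔ x 0 = 0 ∧ x 1 = 0 ∧ x 2 = 0 := by
  constructor
  · intro hx
    refine ⟨coord_zero_of_mem ?_ x hx, coord_zero_of_mem ?_ x hx, coord_zero_of_mem ?_ x hx⟩ <;>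
      · rintro z rfl <;> simp [vab]
  · rintro ⟨h0, h1, h2⟩
    have hd := decomp x
    rw [h0, h1, h2, zero_smul, zero_smul, zero_smul, zero_add, zero_add, zero_add] at hd
    rw [hd]
    exact Submodule.smul_mem _ _ (Submodule.subset_span (by simp))

/-- If `l = β = 1/2`, the ideals of `B'(1/2, 1/2)` are exactly `{0}`, `span {ab}`,
`span {a, ab}`, `span {b, ab}`, `span {a, b, ab}` and the whole algebra. -/
theorem stmt_14 :
    ∀ I : Submodule ℝ (Fin 4 → ℝ),
      IsIdeal (1 / 2) (1 / 2) I ↔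
        (I = ⊥ ∨ I = Submodule.span ℝ ({vab} : Set (Fin 4 → ℝ)) ∨
         I = Submodule.span ℝ ({va, vab} : Set (Fin 4 → ℝ)) ∨
         I = Submodule.span ℝ ({vb, vab} : Set (Fin 4 → ℝ)) ∨
         I = Submodule.span ℝ ({va, vb, vab} : Set (Fin 4 → ℝ)) ∨ I = ⊤) := by
  intro I
  constructor
  · intro hI
    by_cases hA : ∃ y ∈ I, y 0 ≠ 0
    · -- I = ⊤
      obtain ⟨y, hyI, hy0⟩ := hA
      have h1 : Bmul (1/2) (1/2) vo y ∈ I := hI _ _ hyI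
      have h2 : Bmul (1/2) (1/2) vo (Bmul (1/2) (1/2) vo y) ∈ I := hI _ _ h1
      have hvo : vo ∈ I := by
        have hm := I.smul_mem (1 / y 0) (I.sub_mem (I.smul_mem (2:ℝ) h2) h1)
        have he : (1 / y 0) • ((2:ℝ) • Bmul (1/2) (1/2) vo (Bmul (1/2) (1/2) vo y)
            - Bmul (1/2) (1/2) vo y) = vo := by
          funext i; fin_cases i <;>
            simp [Bmul, vo] <;> field_simp <;> ring
        rwa [he] at hm
      have hva : va ∈ I := by
        have hm := I.smul_mem (2:ℝ) (hI va vo hvo)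
        have he : (2:ℝ) • Bmul (1/2) (1/2) va vo = va := by
          funext i; fin_cases i <;> simp [Bmul, vo, va] <;> norm_num
        rwa [he] at hm
      have hvb : vb ∈ I := by
        have hm := I.smul_mem (2:ℝ) (hI vb vo hvo)
        have he : (2:ℝ) • Bmul (1/2) (1/2) vb vo = vb := by
          funext i; fin_cases i <;> simp [Bmul, vo, vb] <;> norm_num
        rwa [he] at hm
      have hvab : vab ∈ I := by
        have hm := hI va vb hvb
        have he : Bmul (1/2) (1/2) va vb = vab := by
          funext i; fin_cases i <;> simp [Bmul, va, vb, vab] <;> norm_num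
        rwa [he] at hm
      refine Or.inr (Or.inr (Or.inr (Or.inr (Or.inr ?_))))
      rw [Submodule.eq_top_iff']
      intro x
      rw [decomp x]
      exact add_mem (add_mem (add_mem (I.smul_mem _ hvo) (I.smul_mem _ hva))
        (I.smul_mem _ hvb)) (I.smul_mem _ hvab)
    · push_neg at hA
      -- key membership facts
      have hsa : ∀ y ∈ I, y 1 • va ∈ I := by
        intro y hy
        have hm := hI va (Bmul (1/2) (1/2) va y) (hI va y hy)
        have he : Bmul (1/2) (1/2) va (Bmul (1/2) (1/2) va y) = y 1 • va := by
          funext i; fin_cases i <;> simp [Bmul, va, hA y hy] <;> norm_num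
        rwa [he] at hm
      have hsb : ∀ y ∈ I, y 2 • vb ∈ I := by
        intro y hy
        have hm := hI vb (Bmul (1/2) (1/2) vb y) (hI vb y hy)
        have he : Bmul (1/2) (1/2) vb (Bmul (1/2) (1/2) vb y) = y 2 • vb := by
          funext i; fin_cases i <;> simp [Bmul, vb, hA y hy] <;> norm_num
        rwa [he] at hm
      have hsab2 : ∀ y ∈ I, y 2 • vab ∈ I := by
        intro y hy
        have hm := I.sub_mem (hI va y hy) (hsa y hy)
        have he : Bmul (1/2) (1/2) va y - y 1 • va = y 2 • vab := by
          funext i; fin_cases i <;> simp [Bmul, va, vab, hA y hy] <;> norm_num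
        rwa [he] at hm
      have hsab1 : ∀ y ∈ I, y 1 • vab ∈ I := by
        intro y hy
        have hm := I.sub_mem (hI vb y hy) (hsb y hy)
        have he : Bmul (1/2) (1/2) vb y - y 2 • vb = y 1 • vab := by
          funext i; fin_cases i <;> simp [Bmul, vb, vab, hA y hy] <;> norm_num
        rwa [he] at hm
      have hsab3 : ∀ y ∈ I, y 3 • vab ∈ I := by
        intro y hy
        have hm := I.sub_mem (I.sub_mem hy (hsa y hy)) (hsb y hy)
        have he : y - y 1 • va - y 2 • vb = y 3 • vab := by
          funext i; fin_cases i <;>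
            simp [va, vb, vab, Matrix.vecHead, Matrix.vecTail, hA y hy,
              show (Fin.succ 2 : Fin 4) = 3 from rfl]
        rwa [he] at hm
      by_cases h1 : ∃ y ∈ I, y 1 ≠ 0
      · obtain ⟨y, hy, hy1⟩ := h1
        have hva : va ∈ I := by
          have := I.smul_mem (y 1)⁻¹ (hsa y hy)
          rwa [smul_smul, inv_mul_cancel₀ hy1, one_smul] at this
        have hvab : vab ∈ I := by
          have := I.smul_mem (y 1)⁻¹ (hsab1 y hy)
          rwa [smul_smul, inv_mul_cancel₀ hy1, one_smul] at this
        by_cases h2 : ∃ y ∈ I, y 2 ≠ 0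
        · obtain ⟨z, hz, hz2⟩ := h2
          have hvb : vb ∈ I := by
            have := I.smul_mem (z 2)⁻¹ (hsb z hz)
            rwa [smul_smul, inv_mul_cancel₀ hz2, one_smul] at this
          refine Or.inr (Or.inr (Or.inr (Or.inr (Or.inl ?_))))
          apply le_antisymm
          · intro x hx
            exact (mem_sabab x).mpr (hA x hx)
          · rw [Submodule.span_le]
            rintro z (rfl | rfl | rfl) <;> assumption
        · push_neg at h2
          refine Or.inr (Or.inr (Or.inl ?_))
          apply le_antisymm
          · intro x hx
            exact (mem_saab x).mpr ⟨hA x hx, h2 x hx⟩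
          · rw [Submodule.span_le]
            rintro z (rfl | rfl) <;> assumption
      · push_neg at h1
        by_cases h2 : ∃ y ∈ I, y 2 ≠ 0
        · obtain ⟨z, hz, hz2⟩ := h2
          have hvb : vb ∈ I := by
            have := I.smul_mem (z 2)⁻¹ (hsb z hz)
            rwa [smul_smul, inv_mul_cancel₀ hz2, one_smul] at this
          have hvab : vab ∈ I := by
            have := I.smul_mem (z 2)⁻¹ (hsab2 z hz)
            rwa [smul_smul, inv_mul_cancel₀ hz2, one_smul] at this
          refine Or.inr (Or.inr (Or.inr (Or.inl ?_)))
          apply le_antisymm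
          · intro x hx
            exact (mem_sbab x).mpr ⟨hA x hx, h1 x hx⟩
          · rw [Submodule.span_le]
            rintro z (rfl | rfl) <;> assumption
        · push_neg at h2
          by_cases h3 : ∃ y ∈ I, y 3 ≠ 0
          · obtain ⟨z, hz, hz3⟩ := h3
            have hvab : vab ∈ I := by
              have := I.smul_mem (z 3)⁻¹ (hsab3 z hz)
              rwa [smul_smul, inv_mul_cancel₀ hz3, one_smul] at this
            refine Or.inr (Or.inl ?_)
            apply le_antisymm
            · intro x hx
              exact (mem_sab x).mpr ⟨hA x hx, h1 x hx, h2 x hx⟩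
            · rw [Submodule.span_le]
              rintro z rfl; assumption
          · push_neg at h3
            refine Or.inl ?_
            rw [Submodule.eq_bot_iff]
            intro x hx
            funext i; fin_cases i
            · exact hA x hx
            · exact h1 x hx
            · exact h2 x hx
            · exact h3 x hx
  · rintro (rfl | rfl | rfl | rfl | rfl | rfl) <;> intro x y hy
    · rw [Submodule.mem_bot] at hy ⊢
      subst hy
      funext i; fin_cases i <;> simp [Bmul]
    · rw [mem_sab] at hy ⊢
      obtain ⟨h0, h1, h2⟩ := hy
      refine ⟨?_, ?_, ?_⟩ <;> simp [Bmul, h0, h1, h2]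
    · rw [mem_saab] at hy ⊢
      obtain ⟨h0, h2⟩ := hy
      refine ⟨?_, ?_⟩ <;> simp [Bmul, h0, h2] <;> norm_num
    · rw [mem_sbab] at hy ⊢
      obtain ⟨h0, h1⟩ := hy
      refine ⟨?_, ?_⟩ <;> simp [Bmul, h0, h1]
    · rw [mem_sabab] at hy ⊢
      simp [Bmul, hy]
    · trivial
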